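/- Let k₁, k₂, k₃ ∈ ℕ and define w : ℝ³ → ℝ by w(x) = cos(2πk₁x₁/l₁)·cos(2πk₂x₂/l₂)·cos(πk₃(x₃+l₃⁻)/l₃), and the vector fields E := (0, ∂₃w, −∂₂w) and H := (iωμ)⁻¹·(−∂₂²w − ∂₃²w, ∂₁∂₂w, ∂₁∂₃w). Then: (a) the first component E₁ vanishes identically on ℝ³; (b) E₂(x) = 0 whenever x₃ = −l₃⁻ or x₃ = l₃⁺; (c) E and H are l₁-periodic in x₁ and l₂-periodic in x₂; and (d) if (k₂,k₃) ≠ (0,0), then E is not identically zero on Ω. -/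

import Mathlib

open Real Complex Filter Topology

/-- Partial derivative in the first coordinate. -/
noncomputable def pd1 {F : Type*} [NormedAddCommGroup F] [NormedSpace ℝ F]
    (f : ℝ × ℝ × ℝ → F) (x : ℝ × ℝ × ℝ) : F :=
  deriv (fun t => f (t, x.2.1, x.2.2)) x.1

/-- Partial derivative in the second coordinate. -/
noncomputable def pd2 {F : Type*} [NormedAddCommGroup F] [NormedSpace ℝ F]
    (f : ℝ × ℝ × ℝ → F) (x : ℝ × ℝ × ℝ) : F :=
  deriv (fun t => f (x.1, t, x.2.2)) x.2.1

/-- Partial derivative in the third coordinate. -/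
noncomputable def pd3 {F : Type*} [NormedAddCommGroup F] [NormedSpace ℝ F]
    (f : ℝ × ℝ × ℝ → F) (x : ℝ × ℝ × ℝ) : F :=
  deriv (fun t => f (x.1, x.2.1, t)) x.2.2

/-- Curl of a complex vector field on ℝ³. -/
noncomputable def curl3 (F : ℝ × ℝ × ℝ → ℂ × ℂ × ℂ) (x : ℝ × ℝ × ℝ) : ℂ × ℂ × ℂ :=
  (pd2 (fun y => (F y).2.2) x - pd3 (fun y => (F y).2.1) x,
   pd3 (fun y => (F y).1) x - pd1 (fun y => (F y).2.2) x,
   pd1 (fun y => (F y).2.1) x - pd2 (fun y => (F y).1) x)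

/-- Divergence of a complex vector field on ℝ³. -/
noncomputable def div3 (F : ℝ × ℝ × ℝ → ℂ × ℂ × ℂ) (x : ℝ × ℝ × ℝ) : ℂ :=
  pd1 (fun y => (F y).1) x + pd2 (fun y => (F y).2.1) x + pd3 (fun y => (F y).2.2) x

/-- Laplacian of a scalar function on ℝ³. -/
noncomputable def lap {F : Type*} [NormedAddCommGroup F] [NormedSpace ℝ F]
    (f : ℝ × ℝ × ℝ → F) (x : ℝ × ℝ × ℝ) : F :=
  pd1 (pd1 f) x + pd2 (pd2 f) x + pd3 (pd3 f) x

/-- Gradient of a complex scalar function on ℝ³. -/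
noncomputable def grad3 (f : ℝ × ℝ × ℝ → ℂ) (x : ℝ × ℝ × ℝ) : ℂ × ℂ × ℂ :=
  (pd1 f x, pd2 f x, pd3 f x)

/-!
The function `w` is a product of three cosines, one in each variable, so its partial
derivatives are again such products, computed factor by factor. Partial derivatives commute
with translations, so the `l₁`- and `l₂`-periodicity of `w` passes to every derivative of it,
hence to `E` and `H`. The boundary condition is the vanishing of
`sin (π k₃ (x₃ + l₃⁻) / l₃)` at `x₃ + l₃⁻ ∈ {0, l₃}`. For non-triviality, a cosine factor is
nonzero near its zero phase, and the derivative of a nonconstant cosine factor is nonzero at a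
quarter period, which lies inside the box; the case `k₃ ≠ 0` uses `E₂`, the case `k₃ = 0`
(so `k₂ ≠ 0`) uses `E₃`.
-/

section Periodic

variable {F : Type*} [NormedAddCommGroup F] [NormedSpace ℝ F] {f : ℝ × ℝ × ℝ → F}
  {v : ℝ × ℝ × ℝ}

theorem Function.Periodic.pd1 (hf : Function.Periodic f v) : Function.Periodic (pd1 f) v := by
  intro x
  simp only [_root_.pd1, Prod.fst_add, Prod.snd_add]
  rw [← deriv_comp_add_const]
  congr 1
  funext t
  exact hf (t, x.2.1, x.2.2)

theorem Function.Periodic.pd2 (hf : Function.Periodic f v) : Function.Periodic (pd2 f) v := by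
  intro x
  simp only [_root_.pd2, Prod.fst_add, Prod.snd_add]
  rw [← deriv_comp_add_const]
  congr 1
  funext t
  exact hf (x.1, t, x.2.2)

theorem Function.Periodic.pd3 (hf : Function.Periodic f v) : Function.Periodic (pd3 f) v := by
  intro x
  simp only [_root_.pd3, Prod.fst_add, Prod.snd_add]
  rw [← deriv_comp_add_const]
  congr 1
  funext t
  exact hf (x.1, x.2.1, t)

end Periodic

noncomputable def sepProd (a b c : ℝ → ℝ) (x : ℝ × ℝ × ℝ) : ℂ :=
  ((a x.1 * b x.2.1 * c x.2.2 : ℝ) : ℂ)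

namespace sepProd

variable {a b c : ℝ → ℝ}

theorem pd2_eq {x : ℝ × ℝ × ℝ} (hb : DifferentiableAt ℝ b x.2.1) :
    pd2 (sepProd a b c) x = ((a x.1 * deriv b x.2.1 * c x.2.2 : ℝ) : ℂ) :=
  ((hb.hasDerivAt.const_mul (a x.1)).mul_const (c x.2.2)).ofReal_comp.deriv

theorem pd3_eq {x : ℝ × ℝ × ℝ} (hc : DifferentiableAt ℝ c x.2.2) :
    pd3 (sepProd a b c) x = ((a x.1 * b x.2.1 * deriv c x.2.2 : ℝ) : ℂ) :=
  (hc.hasDerivAt.const_mul (a x.1 * b x.2.1)).ofReal_comp.deriv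

theorem periodic_fst {l : ℝ} (ha : Function.Periodic a l) :
    Function.Periodic (sepProd a b c) (l, 0, 0) := by
  intro x
  simp [sepProd, ha x.1]

theorem periodic_snd {l : ℝ} (hb : Function.Periodic b l) :
    Function.Periodic (sepProd a b c) (0, l, 0) := by
  intro x
  simp [sepProd, hb x.2.1]

end sepProd

noncomputable def cosWave (α β t : ℝ) : ℝ :=
  Real.cos (α * (t + β))

namespace cosWave

variable {α β : ℝ}

theorem hasDerivAt (t : ℝ) : HasDerivAt (cosWave α β) (-Real.sin (α * (t + β)) * α) t := by
  have h := (((hasDerivAt_id' t).add_const β).const_mul α).cos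
  rwa [mul_one] at h

theorem differentiableAt (t : ℝ) : DifferentiableAt ℝ (cosWave α β) t :=
  (hasDerivAt t).differentiableAt

theorem periodic (k : ℕ) {l : ℝ} (hl : l ≠ 0) :
    Function.Periodic (cosWave (2 * π * k / l) β) l := by
  intro t
  have harg : 2 * π * k / l * (t + l + β) = 2 * π * k / l * (t + β) + k * (2 * π) := by
    field_simp
    ring
  rw [cosWave, harg, Real.cos_add_nat_mul_two_pi, cosWave]

theorem deriv_eq_zero (k : ℕ) {L t : ℝ} (hL : L ≠ 0) (ht : t + β = 0 ∨ t + β = L) :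
    deriv (cosWave (π * k / L) β) t = 0 := by
  rw [(hasDerivAt t).deriv, neg_mul, neg_eq_zero, mul_eq_zero]
  left
  rcases ht with ht | ht
  · rw [ht, mul_zero, Real.sin_zero]
  · rw [ht, div_mul_cancel₀ _ hL, mul_comm, Real.sin_nat_mul_pi]

theorem exists_mem_Ioo_ne_zero {u : ℝ} (h : -β < u) :
    ∃ t ∈ Set.Ioo (-β) u, cosWave α β t ≠ 0 := by
  have hcont : ContinuousAt (cosWave α β) (-β) := (differentiableAt _).continuousAt
  have hne : ∀ᶠ t in 𝓝[>] (-β), cosWave α β t ≠ 0 :=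
    (hcont.eventually_ne (by simp [cosWave])).filter_mono nhdsWithin_le_nhds
  obtain ⟨t, ht, hmem⟩ := (hne.and (Ioo_mem_nhdsGT h)).exists
  exact ⟨t, hmem, ht⟩

theorem exists_mem_Ioo_deriv_ne_zero {u : ℝ} (hα : 0 < α) (h : π / 2 < α * (u + β)) :
    ∃ t ∈ Set.Ioo (-β) u, deriv (cosWave α β) t ≠ 0 := by
  refine ⟨π / 2 / α - β, ⟨?_, ?_⟩, ?_⟩
  · have : 0 < π / 2 / α := by positivity
    linarith
  · rw [sub_lt_iff_lt_add, div_lt_iff₀ hα, mul_comm]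
    exact h
  · rw [(hasDerivAt _).deriv, sub_add_cancel, mul_div_cancel₀ _ hα.ne', Real.sin_pi_div_two]
    simp [hα.ne']

end cosWave

noncomputable def cavityMode (l₁ l₂ l₃p l₃m : ℝ) (k₁ k₂ k₃ : ℕ) : ℝ × ℝ × ℝ → ℂ :=
  sepProd (cosWave (2 * π * k₁ / l₁) 0) (cosWave (2 * π * k₂ / l₂) 0)
    (cosWave (π * k₃ / (l₃p + l₃m)) l₃m)

section cavityMode

variable {l₁ l₂ l₃p l₃m : ℝ} (k₁ k₂ k₃ : ℕ)

theorem cavityMode_eq :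
    cavityMode l₁ l₂ l₃p l₃m k₁ k₂ k₃ = fun x => ((Real.cos (2 * π * (k₁ : ℝ) * x.1 / l₁) *
      Real.cos (2 * π * (k₂ : ℝ) * x.2.1 / l₂) *
      Real.cos (π * (k₃ : ℝ) * (x.2.2 + l₃m) / (l₃p + l₃m)) : ℝ) : ℂ) := by
  funext x
  simp only [cavityMode, sepProd, cosWave, add_zero]
  ring_nf

theorem cavityMode_periodic_fst (hl₁ : l₁ ≠ 0) :
    Function.Periodic (cavityMode l₁ l₂ l₃p l₃m k₁ k₂ k₃) (l₁, 0, 0) :=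
  sepProd.periodic_fst (cosWave.periodic k₁ hl₁)

theorem cavityMode_periodic_snd (hl₂ : l₂ ≠ 0) :
    Function.Periodic (cavityMode l₁ l₂ l₃p l₃m k₁ k₂ k₃) (0, l₂, 0) :=
  sepProd.periodic_snd (cosWave.periodic k₂ hl₂)

theorem pd3_cavityMode_eq_zero (hL : l₃p + l₃m ≠ 0) {x : ℝ × ℝ × ℝ}
    (hx : x.2.2 = -l₃m ∨ x.2.2 = l₃p) : pd3 (cavityMode l₁ l₂ l₃p l₃m k₁ k₂ k₃) x = 0 := by
  rw [cavityMode, sepProd.pd3_eq (cosWave.differentiableAt _), cosWave.deriv_eq_zero k₃ hL,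
    mul_zero, Complex.ofReal_zero]
  rcases hx with hx | hx <;> rw [hx] <;> simp

theorem exists_pd3_or_pd2_cavityMode_ne_zero (hl₁ : 0 < l₁) (hl₂ : 0 < l₂) (hl₃p : 0 < l₃p)
    (hl₃m : 0 < l₃m) (hk : (k₂, k₃) ≠ (0, 0)) :
    ∃ x : ℝ × ℝ × ℝ, (x.1 ∈ Set.Ioo 0 l₁ ∧ x.2.1 ∈ Set.Ioo 0 l₂ ∧ x.2.2 ∈ Set.Ioo (-l₃m) l₃p) ∧
      (pd3 (cavityMode l₁ l₂ l₃p l₃m k₁ k₂ k₃) x ≠ 0 ∨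
        pd2 (cavityMode l₁ l₂ l₃p l₃m k₁ k₂ k₃) x ≠ 0) := by
  obtain ⟨x₁, hx₁, ha⟩ := cosWave.exists_mem_Ioo_ne_zero (α := 2 * π * k₁ / l₁) (β := 0)
    (neg_zero.trans_lt hl₁)
  rw [neg_zero] at hx₁
  rcases Nat.eq_zero_or_pos k₃ with rfl | hk₃
  · have hk₂ : (1 : ℝ) ≤ k₂ := Nat.one_le_cast.2 (Nat.pos_of_ne_zero fun h => hk (by rw [h]))
    obtain ⟨x₂, hx₂, hb⟩ := cosWave.exists_mem_Ioo_deriv_ne_zero (α := 2 * π * k₂ / l₂) (β := 0)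
      (u := l₂) (by positivity) (by rw [add_zero, div_mul_cancel₀ _ hl₂.ne']; nlinarith [pi_pos])
    obtain ⟨x₃, hx₃, hc⟩ := cosWave.exists_mem_Ioo_ne_zero (α := π * (0 : ℕ) / (l₃p + l₃m))
      (β := l₃m) (u := l₃p) (by linarith)
    rw [neg_zero] at hx₂
    refine ⟨(x₁, x₂, x₃), ⟨hx₁, hx₂, hx₃⟩, Or.inr ?_⟩
    rw [cavityMode, sepProd.pd2_eq (cosWave.differentiableAt _)]
    exact_mod_cast mul_ne_zero (mul_ne_zero ha hb) hc
  · have hk₃' : (1 : ℝ) ≤ k₃ := Nat.one_le_cast.2 hk₃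
    have hL : 0 < l₃p + l₃m := add_pos hl₃p hl₃m
    obtain ⟨x₂, hx₂, hb⟩ := cosWave.exists_mem_Ioo_ne_zero (α := 2 * π * k₂ / l₂) (β := 0)
      (neg_zero.trans_lt hl₂)
    obtain ⟨x₃, hx₃, hc⟩ := cosWave.exists_mem_Ioo_deriv_ne_zero (α := π * k₃ / (l₃p + l₃m))
      (β := l₃m) (u := l₃p) (by positivity) (by rw [div_mul_cancel₀ _ hL.ne']; nlinarith [pi_pos])
    rw [neg_zero] at hx₂
    refine ⟨(x₁, x₂, x₃), ⟨hx₁, hx₂, hx₃⟩, Or.inl ?_⟩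
    rw [cavityMode, sepProd.pd3_eq (cosWave.differentiableAt _)]
    exact_mod_cast mul_ne_zero (mul_ne_zero ha hb) hc

end cavityMode

theorem stmt2_general (l₁ l₂ l₃p l₃m μ ω : ℝ)
    (hl₁ : 0 < l₁) (hl₂ : 0 < l₂) (hl₃p : 0 < l₃p) (hl₃m : 0 < l₃m)
    (k₁ k₂ k₃ : ℕ)
    (w : ℝ × ℝ × ℝ → ℂ)
    (hw : w = fun x => ((Real.cos (2 * π * (k₁ : ℝ) * x.1 / l₁) *
        Real.cos (2 * π * (k₂ : ℝ) * x.2.1 / l₂) *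
        Real.cos (π * (k₃ : ℝ) * (x.2.2 + l₃m) / (l₃p + l₃m)) : ℝ) : ℂ))
    (E H : ℝ × ℝ × ℝ → ℂ × ℂ × ℂ)
    (hE : E = fun x => (0, pd3 w x, -(pd2 w x)))
    (hH : H = fun x => (Complex.I * (ω : ℂ) * (μ : ℂ))⁻¹ •
        ((-(pd2 (pd2 w) x) - pd3 (pd3 w) x, pd1 (pd2 w) x, pd1 (pd3 w) x) : ℂ × ℂ × ℂ)) :
    (∀ x : ℝ × ℝ × ℝ, (E x).1 = 0) ∧
    (∀ x : ℝ × ℝ × ℝ, x.2.2 = -l₃m ∨ x.2.2 = l₃p → (E x).2.1 = 0) ∧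
    (∀ x : ℝ × ℝ × ℝ, E (x.1 + l₁, x.2.1, x.2.2) = E x ∧ E (x.1, x.2.1 + l₂, x.2.2) = E x ∧
      H (x.1 + l₁, x.2.1, x.2.2) = H x ∧ H (x.1, x.2.1 + l₂, x.2.2) = H x) ∧
    ((k₂, k₃) ≠ (0, 0) → ∃ x : ℝ × ℝ × ℝ,
      (x.1 ∈ Set.Ioo 0 l₁ ∧ x.2.1 ∈ Set.Ioo 0 l₂ ∧ x.2.2 ∈ Set.Ioo (-l₃m) l₃p) ∧ E x ≠ 0) := by
  rw [← cavityMode_eq] at hw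
  subst hw hE hH
  have hw₁ := cavityMode_periodic_fst (l₂ := l₂) (l₃p := l₃p) (l₃m := l₃m) k₁ k₂ k₃ hl₁.ne'
  have hw₂ := cavityMode_periodic_snd (l₁ := l₁) (l₃p := l₃p) (l₃m := l₃m) k₁ k₂ k₃ hl₂.ne'
  refine ⟨fun x => rfl, fun x hx => pd3_cavityMode_eq_zero k₁ k₂ k₃ (by linarith) hx,
    fun x => ?_, fun hk => ?_⟩
  · have e₁ : (x.1 + l₁, x.2.1, x.2.2) = x + (l₁, 0, 0) := by ext <;> simp
    have e₂ : (x.1, x.2.1 + l₂, x.2.2) = x + (0, l₂, 0) := by ext <;> simp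
    simp only [e₁, e₂, hw₁.pd2 x, hw₁.pd3 x, hw₁.pd2.pd2 x, hw₁.pd3.pd3 x, hw₁.pd2.pd1 x,
      hw₁.pd3.pd1 x, hw₂.pd2 x, hw₂.pd3 x, hw₂.pd2.pd2 x, hw₂.pd3.pd3 x, hw₂.pd2.pd1 x,
      hw₂.pd3.pd1 x, and_self]
  · obtain ⟨x, hx, hne⟩ := exists_pd3_or_pd2_cavityMode_ne_zero k₁ k₂ k₃ hl₁ hl₂ hl₃p hl₃m hk
    refine ⟨x, hx, fun h => ?_⟩
    simp only [Prod.ext_iff, Prod.fst_zero, Prod.snd_zero, neg_eq_zero] at h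
    tauto

/-- boundary, interface and periodicity properties of the eigenfunction
candidate, together with non-triviality. -/
theorem stmt2 (l₁ l₂ l₃p l₃m ε μ ω : ℝ)
    (hl₁ : 0 < l₁) (hl₂ : 0 < l₂) (hl₃p : 0 < l₃p) (hl₃m : 0 < l₃m)
    (hε : 0 < ε) (hμ : 0 < μ) (hω : 0 < ω)
    (k₁ k₂ k₃ : ℕ)
    (w : ℝ × ℝ × ℝ → ℂ)
    (hw : w = fun x => ((Real.cos (2 * π * (k₁ : ℝ) * x.1 / l₁) *
        Real.cos (2 * π * (k₂ : ℝ) * x.2.1 / l₂) *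
        Real.cos (π * (k₃ : ℝ) * (x.2.2 + l₃m) / (l₃p + l₃m)) : ℝ) : ℂ))
    (E H : ℝ × ℝ × ℝ → ℂ × ℂ × ℂ)
    (hE : E = fun x => (0, pd3 w x, -(pd2 w x)))
    (hH : H = fun x => (Complex.I * (ω : ℂ) * (μ : ℂ))⁻¹ •
        ((-(pd2 (pd2 w) x) - pd3 (pd3 w) x, pd1 (pd2 w) x, pd1 (pd3 w) x) : ℂ × ℂ × ℂ)) :
    (∀ x : ℝ × ℝ × ℝ, (E x).1 = 0) ∧
    (∀ x : ℝ × ℝ × ℝ, x.2.2 = -l₃m ∨ x.2.2 = l₃p → (E x).2.1 = 0) ∧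
    (∀ x : ℝ × ℝ × ℝ, E (x.1 + l₁, x.2.1, x.2.2) = E x ∧ E (x.1, x.2.1 + l₂, x.2.2) = E x ∧
      H (x.1 + l₁, x.2.1, x.2.2) = H x ∧ H (x.1, x.2.1 + l₂, x.2.2) = H x) ∧
    ((k₂, k₃) ≠ (0, 0) → ∃ x : ℝ × ℝ × ℝ,
      (x.1 ∈ Set.Ioo 0 l₁ ∧ x.2.1 ∈ Set.Ioo 0 l₂ ∧ x.2.2 ∈ Set.Ioo (-l₃m) l₃p) ∧ E x ≠ 0) :=
  stmt2_general l₁ l₂ l₃p l₃m μ ω hl₁ hl₂ hl₃p hl₃m k₁ k₂ k₃ w hw E H hE hH
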